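/- arXiv:1604.04390 — 2 statements merged into one kernel-verified Lean document; each statement's English description precedes it below -/
import Mathlib

section
/- Let σ : S → A be a pre-strategy. The following are equivalent: (i) σ is courteous and receptive; (ii) both σ : (C(S), ⊇⁻) → (C(A), ⊇⁻) and σ : (C(S), ⊆⁺) → (C(A), ⊆⁺) are discrete fibrations; (iii) σ : (C(S), ⊑_S) → (C(A), ⊑_A) is a discrete fibration for the Scott orders. -/
/-- An event structure presented as raw data: a set of events, a causality
relation and a consistency predicate on (finite) sets of events. -/
structure ES where
  Evt : Type
  le : Evt → Evt → Prop
  Con : Set (Set Evt)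

namespace ES

/-- Strict causality. -/
def lt (E : ES) (a b : E.Evt) : Prop := E.le a b ∧ a ≠ b

/-- The axioms of event structures: `le` is a partial order, causes `[e]` are
finite, consistency is a nonempty collection of finite sets, closed under
subsets, containing all singletons, and closed under adding causal
dependencies. -/
def IsES (E : ES) : Prop :=
  (∀ e, E.le e e) ∧
  (∀ a b c, E.le a b → E.le b c → E.le a c) ∧
  (∀ a b, E.le a b → E.le b a → a = b) ∧
  (∀ e, {e' | E.le e' e}.Finite) ∧
  E.Con.Nonempty ∧
  (∀ X ∈ E.Con, X.Finite) ∧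
  (∀ e, ({e} : Set E.Evt) ∈ E.Con) ∧
  (∀ X ∈ E.Con, ∀ Y, Y ⊆ X → Y ∈ E.Con) ∧
  (∀ X ∈ E.Con, ∀ e ∈ X, ∀ e', E.le e' e → insert e' X ∈ E.Con)

/-- A (finite) configuration: a finite, consistent and down-closed set of events. -/
def Config (E : ES) (x : Set E.Evt) : Prop :=
  x.Finite ∧ (∀ Y, Y ⊆ x → Y.Finite → Y ∈ E.Con) ∧
  ∀ e ∈ x, ∀ e', E.le e' e → e' ∈ x

/-- Immediate causality `e ⇢ e'`. -/
def imc (E : ES) (a b : E.Evt) : Prop :=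
  E.lt a b ∧ ∀ c, E.le a c → E.le c b → c = a ∨ c = b

/-- Simple parallel composition of event structures. -/
def par (E F : ES) : ES where
  Evt := E.Evt ⊕ F.Evt
  le := fun p q =>
    match p, q with
    | Sum.inl a, Sum.inl b => E.le a b
    | Sum.inr a, Sum.inr b => F.le a b
    | _, _ => False
  Con := {X | Sum.inl ⁻¹' X ∈ E.Con ∧ Sum.inr ⁻¹' X ∈ F.Con}

/-- Projection (hiding): restrict an event structure to a subset `V` of events. -/
def proj (E : ES) (V : Set E.Evt) : ES where
  Evt := ↥V
  le := fun a b => E.le a.val b.val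
  Con := {X | Subtype.val '' X ∈ E.Con}

end ES

/-- A (total) map of event structures: preserves configurations and is
injective on each configuration. -/
def IsMap (E F : ES) (f : E.Evt → F.Evt) : Prop :=
  (∀ x, E.Config x → F.Config (f '' x)) ∧ ∀ x, E.Config x → Set.InjOn f x
/-- An event structure with polarities (`true` = positive/Player,
`false` = negative/Opponent). -/
structure ESP extends ES where
  pol : Evt → Bool

namespace ESP

/-- The dual game: polarities reversed. -/
def dual (A : ESP) : ESP where
  toES := A.toES
  pol := fun a => !A.pol a

/-- Simple parallel composition of games. -/
def par (A B : ESP) : ESP where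
  toES := A.toES.par B.toES
  pol := Sum.elim A.pol B.pol

end ESP

/-- A pre-strategy on the game `A`: a polarity-preserving map of event
structures `σ : S → A`. -/
def IsPreStrategy (S A : ESP) (σ : S.Evt → A.Evt) : Prop :=
  IsMap S.toES A.toES σ ∧ ∀ s, A.pol (σ s) = S.pol s

/-- `polExt pol b x y` means `x ⊆ y` and all events of `y \ x` have polarity `b`;
so `polExt pol true x y` is `x ⊆⁺ y` and `polExt pol false x y` is `x ⊆⁻ y`. -/
def polExt {α : Type} (pol : α → Bool) (b : Bool) (x y : Set α) : Prop :=
  x ⊆ y ∧ ∀ a ∈ y, a ∉ x → pol a = b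

/-- The Scott order: `x ⊑ y` iff `x ⊇⁻ (x ∩ y) ⊆⁺ y`. -/
def scottLE {α : Type} (pol : α → Bool) (x y : Set α) : Prop :=
  polExt pol false (x ∩ y) x ∧ polExt pol true (x ∩ y) y

/-- Courtesy: immediate causal links other than `− ⇢ +` are sent to immediate
causal links of the game. -/
def Courteous (S A : ESP) (σ : S.Evt → A.Evt) : Prop :=
  ∀ s s', S.toES.imc s s' → (S.pol s, S.pol s') ≠ (false, true) →
    A.toES.imc (σ s) (σ s')

/-- Receptivity: every negative extension of `σ x` in the game is matched by a
unique extension of `x`. -/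
def Receptive (S A : ESP) (σ : S.Evt → A.Evt) : Prop :=
  ∀ x, S.toES.Config x → ∀ a, A.pol a = false → a ∉ σ '' x →
    A.toES.Config (insert a (σ '' x)) →
    ∃! s, s ∉ x ∧ S.toES.Config (insert s x) ∧ σ s = a
/-- `σ` is a discrete fibration from `(C(S), rS)` to `(C(A), rA)`: it is
monotone and every `y` with `rA y (σ x)` lifts to a unique `x'` with
`rS x' x` and `σ x' = y`. -/
def DiscFibOn (S A : ES) (σ : S.Evt → A.Evt)
    (rS : Set S.Evt → Set S.Evt → Prop)
    (rA : Set A.Evt → Set A.Evt → Prop) : Prop :=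
  (∀ x x', S.Config x → S.Config x' → rS x x' → rA (σ '' x) (σ '' x')) ∧
  ∀ x, S.Config x → ∀ y, A.Config y → rA y (σ '' x) →
    ∃! x', S.Config x' ∧ rS x' x ∧ σ '' x' = y

/-- The order of the poset `(C, ⊇⁻)`: `x ≤ y` iff `x ⊇⁻ y`, i.e. `y ⊆⁻ x`. -/
def negLE {α : Type} (pol : α → Bool) (x y : Set α) : Prop :=
  polExt pol false y x

/-- The order of the poset `(C, ⊆⁺)`: `x ≤ y` iff `x ⊆⁺ y`. -/
def posLE {α : Type} (pol : α → Bool) (x y : Set α) : Prop :=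
  polExt pol true x y

/-! Positive (`⊆⁺`) lifts are forced to be restrictions `x ∩ σ⁻¹ y`, and courtesy is exactly
what makes such a restriction down-closed. Negative (`⊇⁻`) lifts are built one event at a time
by receptivity; courtesy makes them unique, because a negative event may then be added to a
configuration as soon as its image is enabled in the game, so two lifts can be matched event
by event. Conversely, if `σ` loses an immediate causal link `s ⇢ s'`, then `σ[s'] \ {σ s}` is
a configuration of the game, and lifting it along the fibration that matches the polarity of `s`
produces a configuration of `S` containing `s'` but not `s`. Finally, a Scott-order lift is a
`⊆⁺`-lift followed by a `⊇⁻`-lift, since `x ⊑ y` iff `x ⊇⁻ z ⊆⁺ y` for some `z`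
(necessarily `z = x ∩ y`). -/

namespace ES

variable {E : ES}

def causes (E : ES) (e : E.Evt) : Set E.Evt := {e' | E.le e' e}

namespace IsES

theorem le_refl (hE : E.IsES) (e : E.Evt) : E.le e e := hE.1 e

theorem le_trans (hE : E.IsES) {a b c : E.Evt} (hab : E.le a b) (hbc : E.le b c) : E.le a c :=
  hE.2.1 a b c hab hbc

theorem le_antisymm (hE : E.IsES) {a b : E.Evt} (hab : E.le a b) (hba : E.le b a) : a = b :=
  hE.2.2.1 a b hab hba

theorem finite_causes (hE : E.IsES) (e : E.Evt) : (E.causes e).Finite := hE.2.2.2.1 e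

theorem singleton_mem_con (hE : E.IsES) (e : E.Evt) : ({e} : Set E.Evt) ∈ E.Con :=
  hE.2.2.2.2.2.2.1 e

theorem mem_con_of_subset (hE : E.IsES) {X Y : Set E.Evt} (hX : X ∈ E.Con) (hYX : Y ⊆ X) :
    Y ∈ E.Con :=
  hE.2.2.2.2.2.2.2.1 X hX Y hYX

theorem insert_mem_con (hE : E.IsES) {X : Set E.Evt} {e e' : E.Evt} (hX : X ∈ E.Con)
    (he : e ∈ X) (h : E.le e' e) : insert e' X ∈ E.Con :=
  hE.2.2.2.2.2.2.2.2 X hX e he e' h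

abbrev toPartialOrder (hE : E.IsES) : PartialOrder E.Evt where
  le := E.le
  le_refl := hE.le_refl
  le_trans _ _ _ := hE.le_trans
  le_antisymm _ _ := hE.le_antisymm

theorem exists_minimal (hE : E.IsES) {P : Set E.Evt} (hP : P.Finite) (hne : P.Nonempty) :
    ∃ m ∈ P, ∀ b ∈ P, E.le b m → b = m := by
  let _ := hE.toPartialOrder
  obtain ⟨m, hm⟩ := hP.exists_minimal hne
  exact ⟨m, hm.prop, fun b hb hbm => hm.eq_of_le hb hbm⟩

theorem exists_maximal (hE : E.IsES) {P : Set E.Evt} (hP : P.Finite) (hne : P.Nonempty) :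
    ∃ m ∈ P, ∀ b ∈ P, E.le m b → b = m := by
  let _ := hE.toPartialOrder
  obtain ⟨m, hm⟩ := hP.exists_maximal hne
  exact ⟨m, hm.prop, fun b hb hmb => hm.eq_of_ge hb hmb⟩

theorem lt_wellFounded (hE : E.IsES) : WellFounded E.lt := by
  refine Subrelation.wf (r := InvImage (· < ·) fun e => (E.causes e).ncard)
    (fun {a b} hab => ?_) (InvImage.wf _ wellFounded_lt)
  refine Set.ncard_lt_ncard ⟨fun c hc => hE.le_trans hc hab.1, fun h => hab.2 ?_⟩
    (hE.finite_causes b)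
  exact hE.le_antisymm hab.1 (h (hE.le_refl b))

theorem exists_le_imc_of_lt (hE : E.IsES) {t u : E.Evt} (h : E.lt t u) :
    ∃ c, E.le t c ∧ E.imc c u := by
  have hfin : {c | E.le t c ∧ E.le c u ∧ c ≠ u}.Finite :=
    (hE.finite_causes u).subset fun c hc => hc.2.1
  obtain ⟨m, ⟨htm, hmu, hmu'⟩, hmax⟩ := hE.exists_maximal hfin ⟨t, hE.le_refl t, h.1, h.2⟩
  refine ⟨m, htm, ⟨hmu, hmu'⟩, fun c hmc hcu => ?_⟩
  by_cases hcu' : c = u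
  · exact Or.inr hcu'
  · exact Or.inl (hmax c ⟨hE.le_trans htm hmc, hcu, hcu'⟩ hmc)

theorem le_mem_of_imc_mem (hE : E.IsES) {z : Set E.Evt}
    (hz : ∀ c u, E.imc c u → u ∈ z → c ∈ z) {e e' : E.Evt} (he : e ∈ z) (h : E.le e' e) :
    e' ∈ z := by
  induction e using hE.lt_wellFounded.induction with
  | _ e ih =>
    by_cases hee : e' = e
    · exact hee ▸ he
    obtain ⟨c, hec, hc⟩ := hE.exists_le_imc_of_lt ⟨h, hee⟩
    exact ih c hc.1 (hz c e hc he) hec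

theorem insert_mem_con_of_subset_causes (hE : E.IsES) {e : E.Evt} {Y : Set E.Evt}
    (hY : Y.Finite) (hYe : Y ⊆ E.causes e) : insert e Y ∈ E.Con := by
  induction Y, hY using Set.Finite.induction_on with
  | empty => simpa using hE.singleton_mem_con e
  | @insert a Y _ _ ih =>
    rw [Set.insert_comm]
    exact hE.insert_mem_con (ih ((Set.subset_insert a Y).trans hYe)) (Set.mem_insert e Y)
      (hYe (Set.mem_insert a Y))

theorem config_causes (hE : E.IsES) (e : E.Evt) : E.Config (E.causes e) := by
  have hcon := hE.insert_mem_con_of_subset_causes (hE.finite_causes e) subset_rfl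
  rw [Set.insert_eq_of_mem (show e ∈ E.causes e from hE.le_refl e)] at hcon
  exact ⟨hE.finite_causes e, fun Y hY _ => hE.mem_con_of_subset hcon hY,
    fun a ha b hb => hE.le_trans hb ha⟩

end IsES

namespace Config

variable {x y z : Set E.Evt}

theorem of_subset (hx : E.Config x) (hzx : z ⊆ x)
    (hz : ∀ e ∈ z, ∀ e', E.le e' e → e' ∈ z) : E.Config z :=
  ⟨hx.1.subset hzx, fun Y hY hYf => hx.2.1 Y (hY.trans hzx) hYf, hz⟩

theorem causes_subset (hx : E.Config x) {e : E.Evt} (he : e ∈ x) : E.causes e ⊆ x :=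
  fun e' h => hx.2.2 e he e' h

theorem inter (hx : E.Config x) (hy : E.Config y) : E.Config (x ∩ y) :=
  hx.of_subset Set.inter_subset_left fun e he e' h => ⟨hx.2.2 e he.1 e' h, hy.2.2 e he.2 e' h⟩

theorem union (hx : E.Config x) (hy : E.Config y) (hz : E.Config z) (hxyz : x ∪ y ⊆ z) :
    E.Config (x ∪ y) :=
  hz.of_subset hxyz <| by
    rintro e (he | he) e' h
    exacts [Or.inl (hx.2.2 e he e' h), Or.inr (hy.2.2 e he e' h)]

theorem diff_singleton (hx : E.Config x) {a : E.Evt} (ha : ∀ b ∈ x, E.le a b → b = a) :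
    E.Config (x \ {a}) :=
  hx.of_subset Set.sdiff_subset fun e he e' h =>
    ⟨hx.2.2 e he.1 e' h, fun (he' : e' = a) => he.2 (ha e he.1 (he' ▸ h))⟩

end Config

theorem IsES.config_causes_diff_self (hE : E.IsES) (e : E.Evt) :
    E.Config (E.causes e \ {e}) :=
  (hE.config_causes e).diff_singleton fun _ hb heb => hE.le_antisymm hb heb

theorem IsES.config_causes_diff_of_imc (hE : E.IsES) {s s' : E.Evt} (h : E.imc s s') :
    E.Config (E.causes s' \ {s, s'}) :=
  (hE.config_causes s').of_subset Set.sdiff_subset <| by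
    rintro e ⟨hes', hne⟩ e' he'e
    refine ⟨hE.le_trans he'e hes', ?_⟩
    rintro (rfl | rfl)
    · exact hne (h.2 e he'e hes')
    · exact hne (Or.inr (hE.le_antisymm hes' he'e))

theorem IsES.exists_insert_config_of_ssubset (hE : E.IsES) {x y : Set E.Evt}
    (hx : E.Config x) (hy : E.Config y) (hxy : x ⊂ y) :
    ∃ a ∈ y \ x, E.Config (insert a x) := by
  obtain ⟨a, ha, hmin⟩ := hE.exists_minimal hy.1.sdiff (Set.nonempty_of_ssubset hxy)
  refine ⟨a, ha, hy.of_subset (Set.insert_subset ha.1 hxy.1) ?_⟩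
  rintro e (rfl | he) e' h
  · by_cases h' : e' ∈ x
    · exact Or.inr h'
    · exact Or.inl (hmin e' ⟨hy.2.2 e ha.1 e' h, h'⟩ h)
  · exact Or.inr (hx.2.2 e he e' h)

end ES

section Polarity

variable {α β : Type} {pol : α → Bool} {b : Bool} {a : α} {x y z : Set α}

theorem polExt.refl (pol : α → Bool) (b : Bool) (x : Set α) : polExt pol b x x :=
  ⟨subset_rfl, fun _ ha hna => absurd ha hna⟩

theorem polExt.trans (hxy : polExt pol b x y) (hyz : polExt pol b y z) : polExt pol b x z :=
  ⟨hxy.1.trans hyz.1, fun c hc hcx => by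
    by_cases hcy : c ∈ y
    exacts [hxy.2 c hcy hcx, hyz.2 c hc hcy]⟩

theorem polExt_insert (h : pol a = b) (x : Set α) : polExt pol b x (insert a x) :=
  ⟨Set.subset_insert a x, fun c hc hcx => by
    rcases hc with rfl | hc
    exacts [h, absurd hc hcx]⟩

theorem polExt_diff_singleton (h : pol a = b) (x : Set α) : polExt pol b (x \ {a}) x :=
  ⟨Set.sdiff_subset, fun c hc hcx => by
    rwa [show c = a from by_contra fun hca => hcx ⟨hc, hca⟩]⟩

theorem polExt.diff_singleton (h : polExt pol b x y) (ha : a ∉ x) :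
    polExt pol b x (y \ {a}) :=
  ⟨fun c hc => ⟨h.1 hc, fun (hca : c = a) => ha (hca ▸ hc)⟩, fun c hc hcx => h.2 c hc.1 hcx⟩

theorem polExt.image {polβ : β → Bool} {f : α → β} (hf : ∀ a, polβ (f a) = pol a)
    (h : polExt pol b x y) : polExt polβ b (f '' x) (f '' y) := by
  refine ⟨Set.image_mono h.1, ?_⟩
  rintro _ ⟨c, hc, rfl⟩ hfc
  rw [hf]
  exact h.2 c hc fun hcx => hfc (Set.mem_image_of_mem f hcx)

theorem scottLE.of_polExt (hzx : polExt pol false z x) (hzy : polExt pol true z y) :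
    scottLE pol x y := by
  have hz : x ∩ y = z := by
    refine subset_antisymm (fun c ⟨hcx, hcy⟩ => by_contra fun hcz => ?_)
      (Set.subset_inter hzx.1 hzy.1)
    exact Bool.false_ne_true ((hzx.2 c hcx hcz).symm.trans (hzy.2 c hcy hcz))
  rw [scottLE, hz]
  exact ⟨hzx, hzy⟩

theorem scottLE.polExt_true (h : scottLE pol x y) (hxy : x ⊆ y) : polExt pol true x y := by
  simpa only [Set.inter_eq_left.mpr hxy] using h.2

theorem scottLE.polExt_false (h : scottLE pol x y) (hyx : y ⊆ x) : polExt pol false y x := by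
  simpa only [Set.inter_eq_right.mpr hyx] using h.1

theorem image_inter_of_scottLE {polβ : β → Bool} {f : α → β} (hf : ∀ a, polβ (f a) = pol a)
    (h : scottLE pol x y) : f '' (x ∩ y) = f '' x ∩ f '' y := by
  refine subset_antisymm (Set.image_inter_subset f x y) ?_
  rintro _ ⟨⟨c, hcx, rfl⟩, ⟨c', hc'y, hfc'⟩⟩
  by_cases hcy : c ∈ y
  · exact ⟨c, ⟨hcx, hcy⟩, rfl⟩
  by_cases hc'x : c' ∈ x
  · exact ⟨c', ⟨hc'x, hc'y⟩, hfc'⟩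
  have hneg := h.1.2 c hcx fun hc => hcy hc.2
  have hpos := h.2.2 c' hc'y fun hc => hc'x hc.1
  rw [← hf, ← hfc', hf] at hneg
  exact absurd (hneg.symm.trans hpos) Bool.false_ne_true

theorem scottLE.image {polβ : β → Bool} {f : α → β} (hf : ∀ a, polβ (f a) = pol a)
    (h : scottLE pol x y) : scottLE polβ (f '' x) (f '' y) := by
  rw [scottLE, ← image_inter_of_scottLE hf h]
  exact ⟨h.1.image hf, h.2.image hf⟩

end Polarity

namespace IsPreStrategy

variable {S A : ESP} {σ : S.Evt → A.Evt} {x x' z : Set S.Evt}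

theorem config_image (hσ : IsPreStrategy S A σ) (hx : S.Config x) : A.Config (σ '' x) :=
  hσ.1.1 x hx

theorem injOn (hσ : IsPreStrategy S A σ) (hx : S.Config x) : Set.InjOn σ x := hσ.1.2 x hx

theorem pol_eq (hσ : IsPreStrategy S A σ) (s : S.Evt) : A.pol (σ s) = S.pol s := hσ.2 s

theorem mem_of_image_mem (hσ : IsPreStrategy S A σ) (hx : S.Config x) (hzx : z ⊆ x)
    {t : S.Evt} (ht : t ∈ x) (h : σ t ∈ σ '' z) : t ∈ z := by
  obtain ⟨u, hu, hut⟩ := h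
  exact hσ.injOn hx (hzx hu) ht hut ▸ hu

theorem eq_of_image_eq_of_subset (hσ : IsPreStrategy S A σ) (hx : S.Config x)
    {x₁ x₂ : Set S.Evt} (h₁ : x₁ ⊆ x) (h₂ : x₂ ⊆ x) (h : σ '' x₁ = σ '' x₂) : x₁ = x₂ :=
  subset_antisymm
    (fun _ ht => hσ.mem_of_image_mem hx h₂ (h₁ ht) (h ▸ Set.mem_image_of_mem σ ht))
    (fun _ ht => hσ.mem_of_image_mem hx h₁ (h₂ ht) (h ▸ Set.mem_image_of_mem σ ht))

theorem eq_insert_of_image_eq_insert (hσ : IsPreStrategy S A σ) (hx' : S.Config x')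
    (hxx' : x ⊆ x') {a : A.Evt} (ha : a ∉ σ '' x) (him : σ '' x' = insert a (σ '' x)) :
    ∃ s ∉ x, x' = insert s x ∧ σ s = a := by
  obtain ⟨s, hs, rfl⟩ : a ∈ σ '' x' := him ▸ Set.mem_insert a _
  refine ⟨s, fun hsx => ha (Set.mem_image_of_mem σ hsx),
    subset_antisymm (fun t ht => ?_) (Set.insert_subset hs hxx'), rfl⟩
  rcases (him ▸ Set.mem_image_of_mem σ ht : σ t ∈ insert (σ s) (σ '' x)) with hts | htx
  · exact Or.inl (hσ.injOn hx' ht hs hts)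
  · exact Or.inr (hσ.mem_of_image_mem hx' hxx' ht htx)

end IsPreStrategy

section Fibration

variable {S A : ESP} {σ : S.Evt → A.Evt}

theorem Courteous.exists_posLE_lift (hS : S.toES.IsES) (hσ : IsPreStrategy S A σ)
    (hc : Courteous S A σ) {x : Set S.Evt} {y : Set A.Evt} (hx : S.Config x)
    (hy : A.Config y) (hyx : posLE A.pol y (σ '' x)) :
    ∃ x', S.Config x' ∧ posLE S.pol x' x ∧ σ '' x' = y := by
  set x' := {s | s ∈ x ∧ σ s ∈ y}
  have hneg : ∀ c ∈ x, σ c ∉ y → S.pol c = true := fun c hcx hcy => by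
    rw [← hσ.pol_eq]
    exact hyx.2 (σ c) (Set.mem_image_of_mem σ hcx) hcy
  have hdown : ∀ c u, S.imc c u → u ∈ x' → c ∈ x' := by
    rintro c u hcu ⟨hux, huy⟩
    have hcx : c ∈ x := hx.2.2 u hux c hcu.1.1
    refine ⟨hcx, by_contra fun hcy => ?_⟩
    have hσcu := hc c u hcu (by simp [hneg c hcx hcy])
    exact hcy (hy.2.2 (σ u) huy (σ c) hσcu.1.1)
  refine ⟨x', hx.of_subset (fun s hs => hs.1) fun e he e' h => hS.le_mem_of_imc_mem hdown he h,
    ⟨fun s hs => hs.1, fun s hsx hsx' => hneg s hsx fun hsy => hsx' ⟨hsx, hsy⟩⟩,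
    subset_antisymm (fun _ ⟨_, hs, hσs⟩ => hσs ▸ hs.2) fun a ha => ?_⟩
  obtain ⟨s, hs, rfl⟩ := hyx.1 ha
  exact ⟨s, ⟨hs, ha⟩, rfl⟩

theorem Courteous.discFibOn_posLE (hS : S.toES.IsES) (hσ : IsPreStrategy S A σ)
    (hc : Courteous S A σ) : DiscFibOn S.toES A.toES σ (posLE S.pol) (posLE A.pol) := by
  refine ⟨fun _ _ _ _ h => polExt.image hσ.pol_eq h, fun x hx y hy hyx => ?_⟩
  obtain ⟨x', hx', hx'x, rfl⟩ := hc.exists_posLE_lift hS hσ hx hy hyx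
  exact ⟨x', ⟨hx', hx'x, rfl⟩,
    fun x'' ⟨_, hx''x, h⟩ => hσ.eq_of_image_eq_of_subset hx hx''x.1 hx'x.1 h⟩

theorem Receptive.exists_negLE_lift (hA : A.toES.IsES) (hσ : IsPreStrategy S A σ)
    (hr : Receptive S A σ) {x : Set S.Evt} {y : Set A.Evt} (hx : S.Config x)
    (hy : A.Config y) (hyx : negLE A.pol y (σ '' x)) :
    ∃ x', S.Config x' ∧ negLE S.pol x' x ∧ σ '' x' = y := by
  induction hn : (y \ σ '' x).ncard generalizing x with
  | zero =>
    have hyx' : y ⊆ σ '' x := Set.sdiff_eq_empty.mp ((Set.ncard_eq_zero (hy.1.sdiff)).mp hn)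
    exact ⟨x, hx, polExt.refl _ _ _, subset_antisymm hyx.1 hyx'⟩
  | succ n ih =>
    have hssub : σ '' x ⊂ y := Set.ssubset_iff_subset_ne.mpr
      ⟨hyx.1, by rintro rfl; simp at hn⟩
    obtain ⟨a, ⟨hay, hax⟩, ha⟩ :=
      hA.exists_insert_config_of_ssubset (hσ.config_image hx) hy hssub
    have hpol := hyx.2 a hay hax
    obtain ⟨s, ⟨-, hs, rfl⟩, -⟩ := hr x hx a hpol hax ha
    have hsx : negLE S.pol (insert s x) x := polExt_insert (hσ.pol_eq s ▸ hpol) x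
    have hyxs : negLE A.pol y (σ '' insert s x) := by
      rw [Set.image_insert_eq]
      exact ⟨Set.insert_subset hay hyx.1, fun b hb hbx => hyx.2 b hb fun h => hbx (Or.inr h)⟩
    have hcard : (y \ σ '' insert s x).ncard = n := by
      rw [Set.image_insert_eq, ← Set.union_singleton, ← Set.sdiff_sdiff,
        Set.ncard_sdiff_singleton_of_mem (Set.mem_sdiff_of_mem hay hax), hn, Nat.add_sub_cancel]
    obtain ⟨x', hx', hx'x, rfl⟩ := ih hs hyxs hcard
    exact ⟨x', hx', hsx.trans hx'x, rfl⟩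
theorem Courteous.config_insert_of_pol_eq_false (hS : S.toES.IsES) (hσ : IsPreStrategy S A σ)
    (hc : Courteous S A σ) {w z : Set S.Evt} {u : S.Evt} (hz : S.Config z) (hw : S.Config w)
    (hwz : w ⊆ z) (hu : u ∈ z) (hpol : S.pol u = false)
    (hins : A.Config (insert (σ u) (σ '' w))) : S.Config (insert u w) := by
  refine hz.of_subset (Set.insert_subset hu hwz) fun e he e' h => hS.le_mem_of_imc_mem ?_ he h
  rintro c v hcv (rfl | hv)
  · have hσcv := hc c v hcv (by simp [hpol])
    rcases hins.2.2 (σ v) (Set.mem_insert _ _) (σ c) hσcv.1.1 with h | h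
    · exact absurd h hσcv.1.2
    · exact Or.inr (hσ.mem_of_image_mem hz hwz (hz.2.2 v hu c hcv.1.1) h)
  · exact Or.inr (hw.2.2 v hv c hcv.1.1)

theorem Courteous.subset_of_negLE_of_image_eq (hS : S.toES.IsES) (hσ : IsPreStrategy S A σ)
    (hc : Courteous S A σ) (hr : Receptive S A σ) {x x₁ x₂ : Set S.Evt} (hx : S.Config x)
    (hx₁ : S.Config x₁) (hx₂ : S.Config x₂) (h₁ : negLE S.pol x₁ x) (h₂ : negLE S.pol x₂ x)
    (h : σ '' x₁ = σ '' x₂) : x₁ ⊆ x₂ := by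
  intro s hs
  induction s using hS.lt_wellFounded.induction with | _ s ih => ?_
  by_cases hsx : s ∈ x
  · exact h₂.1 hsx
  have hsx₁ : S.causes s ⊆ x₁ := hx₁.causes_subset hs
  set w := x ∪ (S.causes s \ {s})
  have hwx₁ : w ⊆ x₁ := Set.union_subset h₁.1 (Set.sdiff_subset.trans hsx₁)
  have hwx₂ : w ⊆ x₂ := Set.union_subset h₂.1 fun t ht => ih t ⟨ht.1, ht.2⟩ (hsx₁ ht.1)
  have hw : S.Config w := hx.union (hS.config_causes_diff_self s) hx₁ hwx₁
  have hsw : s ∉ w := by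
    rintro (h | h)
    exacts [hsx h, h.2 rfl]
  have hsw' : S.Config (insert s w) := by
    have hins : insert s w = x ∪ S.causes s := by
      ext t
      by_cases hts : t = s
      · subst hts
        simp [w, hS.le_refl t, ES.causes]
      · simp [w, hts]
    rw [hins]
    exact hx.union (hS.config_causes s) hx₁ (Set.union_subset h₁.1 hsx₁)
  obtain ⟨u, hu, hus⟩ : σ s ∈ σ '' x₂ := h ▸ Set.mem_image_of_mem σ hs
  have hpol : A.pol (σ s) = false := by rw [hσ.pol_eq]; exact h₁.2 s hs hsx
  have hins : A.Config (insert (σ s) (σ '' w)) := by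
    rw [← Set.image_insert_eq]; exact hσ.config_image hsw'
  have hσsw : σ s ∉ σ '' w := fun h' => hsw (hσ.mem_of_image_mem hx₁ hwx₁ hs h')
  have hu' : S.Config (insert u w) :=
    hc.config_insert_of_pol_eq_false hS hσ hx₂ hw hwx₂ hu
      (by rw [← hσ.pol_eq, hus, hpol]) (hus ▸ hins)
  -- `s` and `u` both extend `w` by the same negative game event, so receptivity identifies them.
  obtain ⟨_, _, huniq⟩ := hr w hw (σ s) hpol hσsw hins
  have hus' : u = s :=
    (huniq u ⟨fun h' => hσsw (hus ▸ Set.mem_image_of_mem σ h'), hu', hus⟩).trans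
      (huniq s ⟨hsw, hsw', rfl⟩).symm
  exact hus' ▸ hu

theorem Courteous.discFibOn_negLE (hS : S.toES.IsES) (hA : A.toES.IsES)
    (hσ : IsPreStrategy S A σ) (hc : Courteous S A σ) (hr : Receptive S A σ) :
    DiscFibOn S.toES A.toES σ (negLE S.pol) (negLE A.pol) := by
  refine ⟨fun _ _ _ _ h => polExt.image hσ.pol_eq h, fun x hx y hy hyx => ?_⟩
  obtain ⟨x', hx', hx'x, rfl⟩ := hr.exists_negLE_lift hA hσ hx hy hyx
  exact ⟨x', ⟨hx', hx'x, rfl⟩, fun x'' ⟨hx'', hx''x, h⟩ => subset_antisymm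
    (hc.subset_of_negLE_of_image_eq hS hσ hr hx hx'' hx' hx''x hx'x h)
    (hc.subset_of_negLE_of_image_eq hS hσ hr hx hx' hx'' hx'x hx''x h.symm)⟩

theorem receptive_of_discFibOn_negLE (hσ : IsPreStrategy S A σ)
    (hnf : DiscFibOn S.toES A.toES σ (negLE S.pol) (negLE A.pol)) : Receptive S A σ := by
  intro x hx a hpol hax ha
  obtain ⟨x', ⟨hx', hxx', hx'a⟩, huniq⟩ := hnf.2 x hx _ ha (polExt_insert hpol _)
  obtain ⟨s, hsx, rfl, rfl⟩ := hσ.eq_insert_of_image_eq_insert hx' hxx'.1 hax hx'a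
  refine ⟨s, ⟨hsx, hx', rfl⟩, fun s' ⟨hs'x, hs', hs'a⟩ => ?_⟩
  have hs's : insert s' x = insert s x :=
    huniq _ ⟨hs', polExt_insert (hσ.pol_eq s' ▸ hs'a ▸ hpol) x, by rw [Set.image_insert_eq, hs'a]⟩
  exact (hs's ▸ Set.mem_insert s' x).resolve_right hs'x
namespace IsPreStrategy

variable {s s' : S.Evt}

theorem not_lt_image_of_imc (hS : S.toES.IsES) (hσ : IsPreStrategy S A σ) (h : S.imc s s')
    {t : S.Evt} (ht : S.le t s') (hts' : t ≠ s') : ¬ A.lt (σ s) (σ t) := by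
  intro hlt
  have htw : t ∈ S.causes s' \ {s, s'} :=
    ⟨ht, by rintro (rfl | rfl); exacts [hlt.2 rfl, hts' rfl]⟩
  have hsw := hσ.mem_of_image_mem (hS.config_causes s') Set.sdiff_subset h.1.1
    ((hσ.config_image (hS.config_causes_diff_of_imc h)).2.2 _ (Set.mem_image_of_mem σ htw) _
      hlt.1)
  exact hsw.2 (Or.inl rfl)

theorem imc_image_of_lt_image (hS : S.toES.IsES) (hσ : IsPreStrategy S A σ)
    (h : S.imc s s') (hlt : A.lt (σ s) (σ s')) : A.imc (σ s) (σ s') := by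
  refine ⟨hlt, fun b hsb hbs' => ?_⟩
  obtain ⟨t, ht, rfl⟩ := (hσ.config_image (hS.config_causes s')).2.2 _
    (Set.mem_image_of_mem σ (hS.le_refl s')) b hbs'
  by_cases hts' : t = s'
  · exact Or.inr (hts' ▸ rfl)
  · by_contra hne
    exact hσ.not_lt_image_of_imc hS h ht hts' ⟨hsb, fun h' => hne (Or.inl h'.symm)⟩

theorem config_image_causes_diff (hS : S.toES.IsES) (hσ : IsPreStrategy S A σ)
    (h : S.imc s s') (hlt : ¬ A.lt (σ s) (σ s')) : A.Config (σ '' S.causes s' \ {σ s}) := by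
  refine (hσ.config_image (hS.config_causes s')).diff_singleton ?_
  rintro _ ⟨t, ht, rfl⟩ hst
  by_contra hne
  by_cases hts' : t = s'
  · subst hts'
    exact hlt ⟨hst, fun h' => hne h'.symm⟩
  · exact hσ.not_lt_image_of_imc hS h ht hts' ⟨hst, fun h' => hne h'.symm⟩

theorem image_ne_image_causes_diff (hS : S.toES.IsES) (hσ : IsPreStrategy S A σ)
    (h : S.imc s s') {x₀ : Set S.Evt} (hx₀ : S.Config x₀) (hx₀s' : x₀ ⊆ S.causes s') :
    σ '' x₀ ≠ σ '' S.causes s' \ {σ s} := by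
  intro himg
  have hs's : σ s' ≠ σ s := fun h' =>
    h.1.2 (hσ.injOn (hS.config_causes s') h.1.1 (hS.le_refl s') h'.symm)
  have hs'x₀ : s' ∈ x₀ := hσ.mem_of_image_mem (hS.config_causes s') hx₀s' (hS.le_refl s')
    (himg ▸ ⟨Set.mem_image_of_mem σ (hS.le_refl s'), hs's⟩)
  have hsx₀ : σ s ∈ σ '' x₀ := Set.mem_image_of_mem σ (hx₀.2.2 s' hs'x₀ s h.1.1)
  exact (himg ▸ hsx₀).2 rfl

end IsPreStrategy

variable {s s' : S.Evt}

theorem imc_image_of_discFibOn_posLE (hS : S.toES.IsES) (hσ : IsPreStrategy S A σ)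
    (hpf : DiscFibOn S.toES A.toES σ (posLE S.pol) (posLE A.pol)) (h : S.imc s s')
    (hpol : S.pol s = true) : A.imc (σ s) (σ s') := by
  refine hσ.imc_image_of_lt_image hS h (by_contra fun hlt => ?_)
  obtain ⟨x₀, ⟨hx₀, hx₀s', himg⟩, -⟩ := hpf.2 _ (hS.config_causes s') _
    (hσ.config_image_causes_diff hS h hlt) (polExt_diff_singleton (hσ.pol_eq s ▸ hpol) _)
  exact hσ.image_ne_image_causes_diff hS h hx₀ hx₀s'.1 himg

theorem imc_image_of_discFibOn_negLE (hS : S.toES.IsES) (hσ : IsPreStrategy S A σ)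
    (hnf : DiscFibOn S.toES A.toES σ (negLE S.pol) (negLE A.pol)) (h : S.imc s s')
    (hpol : S.pol s = false) (hpol' : S.pol s' = false) : A.imc (σ s) (σ s') := by
  refine hσ.imc_image_of_lt_image hS h (by_contra fun hlt => ?_)
  have hcs' := hS.config_causes s'
  have hw := hS.config_causes_diff_of_imc h
  have hwcs' : negLE S.pol (S.causes s') (S.causes s' \ {s, s'}) := by
    refine ⟨Set.sdiff_subset, fun t ht htw => ?_⟩
    rcases not_not.mp fun h' => htw ⟨ht, h'⟩ with rfl | rfl
    exacts [hpol, hpol']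
  have hσsw : σ s ∉ σ '' (S.causes s' \ {s, s'}) := fun h' =>
    (hσ.mem_of_image_mem hcs' Set.sdiff_subset h.1.1 h').2 (Or.inl rfl)
  obtain ⟨x₁, ⟨hx₁, hwx₁, hx₁y⟩, -⟩ := hnf.2 _ hw _ (hσ.config_image_causes_diff hS h hlt)
    ((hwcs'.image hσ.pol_eq).diff_singleton hσsw)
  obtain ⟨x₂, ⟨hx₂, hx₁x₂, hx₂y⟩, -⟩ := hnf.2 _ hx₁ _ (hσ.config_image hcs')
    (hx₁y ▸ polExt_diff_singleton (hσ.pol_eq s ▸ hpol) _)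
  obtain ⟨_, _, huniq⟩ := hnf.2 _ hw _ (hσ.config_image hcs') (hwcs'.image hσ.pol_eq)
  have hx₂cs' : x₂ = S.causes s' :=
    (huniq x₂ ⟨hx₂, hwx₁.trans hx₁x₂, hx₂y⟩).trans (huniq _ ⟨hcs', hwcs', rfl⟩).symm
  exact hσ.image_ne_image_causes_diff hS h hx₁ (hx₂cs' ▸ hx₁x₂.1) hx₁y

theorem courteous_of_discFibOn (hS : S.toES.IsES) (hσ : IsPreStrategy S A σ)
    (hnf : DiscFibOn S.toES A.toES σ (negLE S.pol) (negLE A.pol))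
    (hpf : DiscFibOn S.toES A.toES σ (posLE S.pol) (posLE A.pol)) : Courteous S A σ := by
  intro s s' h hpol
  cases hs : S.pol s
  · cases hs' : S.pol s'
    · exact imc_image_of_discFibOn_negLE hS hσ hnf h hs hs'
    · exact absurd (by rw [hs, hs']) hpol
  · exact imc_image_of_discFibOn_posLE hS hσ hpf h hs
theorem discFibOn_scottLE (hσ : IsPreStrategy S A σ)
    (hnf : DiscFibOn S.toES A.toES σ (negLE S.pol) (negLE A.pol))
    (hpf : DiscFibOn S.toES A.toES σ (posLE S.pol) (posLE A.pol)) :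
    DiscFibOn S.toES A.toES σ (scottLE S.pol) (scottLE A.pol) := by
  refine ⟨fun _ _ _ _ h => h.image hσ.pol_eq, fun x hx y hy hyx => ?_⟩
  obtain ⟨x₀, ⟨hx₀, hx₀x, hx₀y⟩, huniq₀⟩ := hpf.2 x hx _ (hy.inter (hσ.config_image hx)) hyx.2
  obtain ⟨x', ⟨hx', hx₀x', rfl⟩, huniq'⟩ := hnf.2 x₀ hx₀ y hy (hx₀y ▸ hyx.1)
  refine ⟨x', ⟨hx', scottLE.of_polExt hx₀x' hx₀x, rfl⟩,
    fun x'' ⟨hx'', hx''x, hx''y⟩ => huniq' x'' ⟨hx'', ?_, hx''y⟩⟩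
  have hx''x₀ : x'' ∩ x = x₀ := huniq₀ _
    ⟨hx''.inter hx, hx''x.2, by rw [image_inter_of_scottLE hσ.pol_eq hx''x, hx''y]⟩
  exact hx''x₀ ▸ hx''x.1

theorem DiscFibOn.posLE_of_scottLE (hσ : IsPreStrategy S A σ)
    (hsf : DiscFibOn S.toES A.toES σ (scottLE S.pol) (scottLE A.pol)) :
    DiscFibOn S.toES A.toES σ (posLE S.pol) (posLE A.pol) := by
  refine ⟨fun _ _ _ _ h => polExt.image hσ.pol_eq h, fun x hx y hy hyx => ?_⟩
  obtain ⟨x', ⟨hx', hx'x, rfl⟩, huniq⟩ :=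
    hsf.2 x hx _ hy (scottLE.of_polExt (polExt.refl _ _ _) hyx)
  have hx'sub : x' ⊆ x := fun t ht => (hσ.mem_of_image_mem hx' Set.inter_subset_left ht
    (by rw [image_inter_of_scottLE hσ.pol_eq hx'x]
        exact ⟨Set.mem_image_of_mem σ ht, hyx.1 (Set.mem_image_of_mem σ ht)⟩)).2
  exact ⟨x', ⟨hx', hx'x.polExt_true hx'sub, rfl⟩, fun x'' ⟨hx'', hx''x, h⟩ =>
    huniq x'' ⟨hx'', scottLE.of_polExt (polExt.refl _ _ _) hx''x, h⟩⟩

theorem DiscFibOn.negLE_of_scottLE (hσ : IsPreStrategy S A σ)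
    (hsf : DiscFibOn S.toES A.toES σ (scottLE S.pol) (scottLE A.pol)) :
    DiscFibOn S.toES A.toES σ (negLE S.pol) (negLE A.pol) := by
  refine ⟨fun _ _ _ _ h => polExt.image hσ.pol_eq h, fun x hx y hy hyx => ?_⟩
  obtain ⟨x', ⟨hx', hx'x, rfl⟩, huniq⟩ :=
    hsf.2 x hx _ hy (scottLE.of_polExt hyx (polExt.refl _ _ _))
  have hsubx' : x ⊆ x' := fun t ht => (hσ.mem_of_image_mem hx Set.inter_subset_right ht
    (by rw [image_inter_of_scottLE hσ.pol_eq hx'x]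
        exact ⟨hyx.1 (Set.mem_image_of_mem σ ht), Set.mem_image_of_mem σ ht⟩)).1
  exact ⟨x', ⟨hx', hx'x.polExt_false hsubx', rfl⟩, fun x'' ⟨hx'', hx''x, h⟩ =>
    huniq x'' ⟨hx'', scottLE.of_polExt hx''x (polExt.refl _ _ _), h⟩⟩

end Fibration

/-- a pre-strategy `σ` is courteous and receptive iff it is a
discrete fibration for both `⊇⁻` and `⊆⁺`, iff it is a discrete fibration for
the Scott orders. -/
theorem courteous_receptive_iff_discrete_fibration
    (S A : ESP) (hS : S.toES.IsES) (hA : A.toES.IsES)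
    (σ : S.Evt → A.Evt) (hσ : IsPreStrategy S A σ) :
    ((Courteous S A σ ∧ Receptive S A σ) ↔
      (DiscFibOn S.toES A.toES σ (negLE S.pol) (negLE A.pol) ∧
       DiscFibOn S.toES A.toES σ (posLE S.pol) (posLE A.pol))) ∧
    ((Courteous S A σ ∧ Receptive S A σ) ↔
      DiscFibOn S.toES A.toES σ (scottLE S.pol) (scottLE A.pol)) := by
  have iff_fibrations :
      (Courteous S A σ ∧ Receptive S A σ) ↔
        (DiscFibOn S.toES A.toES σ (negLE S.pol) (negLE A.pol) ∧
         DiscFibOn S.toES A.toES σ (posLE S.pol) (posLE A.pol)) :=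
    ⟨fun ⟨hc, hr⟩ => ⟨hc.discFibOn_negLE hS hA hσ hr,
        hc.discFibOn_posLE hS hσ⟩,
      fun ⟨hnf, hpf⟩ => ⟨courteous_of_discFibOn hS hσ hnf hpf,
        receptive_of_discFibOn_negLE hσ hnf⟩⟩
  exact ⟨iff_fibrations, iff_fibrations.trans
    ⟨fun ⟨hnf, hpf⟩ => discFibOn_scottLE hσ hnf hpf,
      fun hsf => ⟨hsf.negLE_of_scottLE hσ, hsf.posLE_of_scottLE hσ⟩⟩⟩
end

section
/- Let σ : S → A be a receptive and courteous pre-strategy, let x¹, x² ∈ C(CC_A ⊙ S), and let (y¹_S, y¹_A) and (y²_S, y²_A) be the representations of their minimal witnesses (so [xⁱ] ∈ C(CC_A ⊛ S) corresponds to yⁱ_S ∈ C(S), yⁱ_A ∈ C(A) with σ yⁱ_S ∥ yⁱ_A ∈ C(CC_A)). Then: x¹ extends to x² by a single positive event iff y¹_S ⊆ y²_S and y¹_A extends to y²_A by a single positive event; and x¹ extends to x² by a single negative event iff y¹_S = y²_S and y¹_A extends to y²_A by a single negative event. -/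
/-- The generating relation of copycat causality on `A^⊥ ∥ A`:
the causality of `A^⊥ ∥ A` together with the links from each negative
occurrence to the corresponding positive occurrence on the other side. -/
def ccGen (A : ESP) : (A.Evt ⊕ A.Evt) → (A.Evt ⊕ A.Evt) → Prop :=
  fun p q => (A.dual.par A).le p q ∨
    (∃ a, A.pol a = true ∧ p = Sum.inl a ∧ q = Sum.inr a) ∨
    (∃ a, A.pol a = false ∧ p = Sum.inr a ∧ q = Sum.inl a)

/-- The copycat structure `CC_A` on the game `A`. -/
def CC (A : ESP) : ESP where
  Evt := A.Evt ⊕ A.Evt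
  le := Relation.ReflTransGen (ccGen A)
  Con := {X | {e | ∃ e' ∈ X, Relation.ReflTransGen (ccGen A) e e'} ∈ (A.dual.par A).Con}
  pol := (A.dual.par A).pol
/-- The relation `◁` generating the order on the graph `G` of a bijection:
`p ◁ q` when both are in `G` and `p.1 <_S q.1` or `p.2 <_T q.2`. -/
def gRel (S T : ES) (G : Set (S.Evt × T.Evt)) :
    (S.Evt × T.Evt) → (S.Evt × T.Evt) → Prop :=
  fun p q => p ∈ G ∧ q ∈ G ∧ (S.lt p.1 q.1 ∨ T.lt p.2 q.2)

/-- The graph `G` is secured: the reflexive-transitive closure of `◁` on `G`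
is antisymmetric (hence a partial order). -/
def SecuredOn (S T : ES) (G : Set (S.Evt × T.Evt)) : Prop :=
  ∀ p q, Relation.ReflTransGen (gRel S T G) p q →
    Relation.ReflTransGen (gRel S T G) q p → p = q

/-- `G` is (the graph of) a secured bijection `φ : x ≃ σ x = τ y ≃ y` between
configurations `x ∈ C(S)` and `y ∈ C(T)`, an element of `SB(σ, τ)`. -/
def IsSecBij (S T A : ES) (σ : S.Evt → A.Evt) (τ : T.Evt → A.Evt)
    (G : Set (S.Evt × T.Evt)) : Prop :=
  S.Config (Prod.fst '' G) ∧ T.Config (Prod.snd '' G) ∧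
  (∀ p ∈ G, σ p.1 = τ p.2) ∧
  (∀ s ∈ Prod.fst '' G, ∀ t ∈ Prod.snd '' G, σ s = τ t → (s, t) ∈ G) ∧
  σ '' (Prod.fst '' G) = τ '' (Prod.snd '' G) ∧
  SecuredOn S T G

/-- `G` has a top (greatest) element for the induced order. -/
def IsPrime (S T : ES) (G : Set (S.Evt × T.Evt)) : Prop :=
  ∃ p ∈ G, ∀ q ∈ G, Relation.ReflTransGen (gRel S T G) q p

/-- The interaction `S ∧ T` of `σ : S → A` and `τ : T → A`: events are the
prime secured bijections, causality is inclusion of graphs, and a finite set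
of events is consistent when the union of their graphs is a secured bijection. -/
def Interaction (S T A : ES) (σ : S.Evt → A.Evt) (τ : T.Evt → A.Evt) : ES where
  Evt := {G : Set (S.Evt × T.Evt) // IsSecBij S T A σ τ G ∧ IsPrime S T G}
  le := fun G G' => G.val ⊆ G'.val
  Con := {X | X.Finite ∧ IsSecBij S T A σ τ (⋃ G ∈ X, G.val)}
/-- The interaction `CC_A ⊛ S`: the pullback of `σ ∥ id_A : S ∥ A → A ∥ A`
and `ccc_A = id : CC_A → A ∥ A` (polarities ignored). -/
def ccInterES (A S : ESP) (σ : S.Evt → A.Evt) : ES :=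
  Interaction (S.toES.par A.toES) (CC A).toES (A.toES.par A.toES)
    (Sum.map σ id) id

/-- The graph of the bijection `x ∥ y ≃ σ x ∥ y` determined by a pair of
configurations `(x, y) ∈ C(S) × C(A)` (the secured bijection `Ψ⁻¹(x, y)`). -/
def ccGraph (A S : ESP) (σ : S.Evt → A.Evt) (xS : Set S.Evt) (xA : Set A.Evt) :
    Set ((S.Evt ⊕ A.Evt) × (A.Evt ⊕ A.Evt)) :=
  {p | p.1 ∈ Sum.inl '' xS ∪ Sum.inr '' xA ∧ p.2 = Sum.map σ id p.1}

/-- All maximal events of the graph `G` (for its induced order) are visible,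
i.e. project to the right-hand copy of `A`. -/
def MaxVis (A S : ESP) (σ : S.Evt → A.Evt)
    (G : Set ((S.Evt ⊕ A.Evt) × (A.Evt ⊕ A.Evt))) : Prop :=
  ∀ p ∈ G, (∀ q ∈ G, Relation.ReflTransGen
      (gRel (S.toES.par A.toES) (CC A).toES G) p q → q = p) →
    ∃ a : A.Evt, p.1 = Sum.inr a
/-- Visibility of an event of `CC_A ⊛ S`: its top synchronised pair projects
to the right-hand copy of `A`. -/
def ccVis (A S : ESP) (σ : S.Evt → A.Evt) (G : (ccInterES A S σ).Evt) : Prop :=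
  ∃ a : A.Evt,
    ((Sum.inr a, Sum.inr a) : (S.Evt ⊕ A.Evt) × (A.Evt ⊕ A.Evt)) ∈ G.val ∧
    ∀ q ∈ G.val, Relation.ReflTransGen
      (gRel (S.toES.par A.toES) (CC A).toES G.val) q (Sum.inr a, Sum.inr a)

/-- The composition `CC_A ⊙ S`: the projection of `CC_A ⊛ S` to its visible
events. -/
def ccCompES (A S : ESP) (σ : S.Evt → A.Evt) : ES :=
  (ccInterES A S σ).proj {G | ccVis A S σ G}

/-- The labelling map `ccc_A ⊙ σ : CC_A ⊙ S → A` of the composition. -/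
noncomputable def ccCompLabel (A S : ESP) (σ : S.Evt → A.Evt)
    (G : (ccCompES A S σ).Evt) : A.Evt :=
  Exists.choose (G.prop : ccVis A S σ G.val)

/-- The composition `CC_A ⊙ S` as an esp, with polarities inherited from the
right-hand copy of `A`. -/
noncomputable def ccCompESP (A S : ESP) (σ : S.Evt → A.Evt) : ESP where
  toES := ccCompES A S σ
  pol := fun G => A.pol (ccCompLabel A S σ G)

/-- The union of the graphs of the events of the minimal witness
`[z] ∈ C(CC_A ⊛ S)` of a configuration `z ∈ C(CC_A ⊙ S)`. -/
def ccWitUnion (A S : ESP) (σ : S.Evt → A.Evt)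
    (z : Set (ccCompES A S σ).Evt) :
    Set ((S.Evt ⊕ A.Evt) × (A.Evt ⊕ A.Evt)) :=
  ⋃ H ∈ {H : (ccInterES A S σ).Evt | ∃ G ∈ z, H.val ⊆ G.val.val}, H.val

/-- The `C(S)` component `y_S` of the representation via `Ψ` of the minimal
witness of `z ∈ C(CC_A ⊙ S)`. -/
def ccWitS (A S : ESP) (σ : S.Evt → A.Evt)
    (z : Set (ccCompES A S σ).Evt) : Set S.Evt :=
  Sum.inl ⁻¹' (Prod.fst '' ccWitUnion A S σ z)

/-- The `C(A)` component `y_A` of the representation via `Ψ` of the minimal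
witness of `z ∈ C(CC_A ⊙ S)`. -/
def ccWitA (A S : ESP) (σ : S.Evt → A.Evt)
    (z : Set (ccCompES A S σ).Evt) : Set A.Evt :=
  Sum.inr ⁻¹' (Prod.fst '' ccWitUnion A S σ z)

/-!
An event of `CC_A ⊙ S` is a prime secured bijection whose top is a visible pair
`(inr a, inr a)`, and two such primes with the same top inside one secured bijection coincide.
So on a configuration `x` the label is a bijection onto `y_A`, `x` is recovered from its minimal
witness, and `x¹` grows by one event labelled `a` exactly when the witness grows by `a` on the
`A`-side. When `a` is negative the `S`-side does not grow: whatever lies strictly below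
`(inr a, inr a)` already lies below another visible pair of the witness.
-/

open Relation Set

theorem Set.exists_eq_insert_of_image_eq_insert {α β : Type*} {f : α → β} {s t : Set α}
    {b : β} (hst : s ⊆ t) (hf : InjOn f t) (hb : b ∉ f '' s)
    (h : f '' t = insert b (f '' s)) : ∃ a, a ∉ s ∧ t = insert a s ∧ f a = b := by
  obtain ⟨a, hat, rfl⟩ : b ∈ f '' t := h ▸ mem_insert _ _
  have has : a ∉ s := fun has => hb (mem_image_of_mem f has)
  refine ⟨a, has, (insert_subset hat hst).antisymm' fun c hct => ?_, rfl⟩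
  rcases h.subset (mem_image_of_mem f hct) with hca | ⟨d, hds, hdc⟩
  · exact .inl (hf hct hat hca)
  · exact .inr (hf (hst hds) hct hdc ▸ hds)

namespace ES

theorem Config.of_subset_s12 {E : ES} {x y : Set E.Evt} (hx : E.Config x) (hyx : y ⊆ x)
    (hy : ∀ e ∈ y, ∀ e', E.le e' e → e' ∈ y) : E.Config y :=
  ⟨hx.1.subset hyx, fun Y hY hYfin => hx.2.1 Y (hY.trans hyx) hYfin, hy⟩

theorem Config.preimage_inl {E F : ES} {x : Set (E.par F).Evt} (hx : (E.par F).Config x) :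
    E.Config (Sum.inl ⁻¹' x) := by
  refine ⟨hx.1.preimage Sum.inl_injective.injOn, fun Y hY hYfin => ?_,
    fun e he e' hle => hx.2.2 (Sum.inl e) he (Sum.inl e') hle⟩
  have hcon := (hx.2.1 _ (image_subset_iff.2 hY) (hYfin.image Sum.inl)).1
  exact preimage_image_eq Y Sum.inl_injective ▸ hcon

end ES

section SecuredBijection

variable {S T A : ES} {σ : S.Evt → A.Evt} {τ : T.Evt → A.Evt} {G W : Set (S.Evt × T.Evt)}

theorem gRel_mono (hGW : G ⊆ W) {p q : S.Evt × T.Evt} (h : gRel S T G p q) : gRel S T W p q :=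
  ⟨hGW h.1, hGW h.2.1, h.2.2⟩

theorem reflTransGen_gRel_mono (hGW : G ⊆ W) {p q : S.Evt × T.Evt}
    (h : ReflTransGen (gRel S T G) p q) : ReflTransGen (gRel S T W) p q :=
  ReflTransGen.mono (fun _ _ => gRel_mono hGW) _ _ h

def gIic (S T : ES) (G : Set (S.Evt × T.Evt)) (t : S.Evt × T.Evt) : Set (S.Evt × T.Evt) :=
  {q | q ∈ G ∧ ReflTransGen (gRel S T G) q t}

theorem gIic_subset {t : S.Evt × T.Evt} : gIic S T G t ⊆ G := fun _ hq => hq.1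

theorem mem_gIic_self {t : S.Evt × T.Evt} (ht : t ∈ G) : t ∈ gIic S T G t :=
  ⟨ht, .refl⟩

theorem reflTransGen_gRel_gIic {q t : S.Evt × T.Evt} (h : ReflTransGen (gRel S T G) q t) :
    ReflTransGen (gRel S T (gIic S T G t)) q t := by
  induction h using ReflTransGen.head_induction_on with
  | refl => exact .refl
  | head hstep htail ih =>
    exact .head ⟨⟨hstep.1, .head hstep htail⟩, ⟨hstep.2.1, htail⟩, hstep.2.2⟩ ih

theorem isPrime_gIic {t : S.Evt × T.Evt} (ht : t ∈ G) : IsPrime S T (gIic S T G t) :=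
  ⟨t, mem_gIic_self ht, fun _ hq => reflTransGen_gRel_gIic hq.2⟩

namespace IsSecBij

theorem snd_eq (hG : IsSecBij S T A σ τ G) {p : S.Evt × T.Evt} (hp : p ∈ G) : τ p.2 = σ p.1 :=
  (hG.2.2.1 p hp).symm

theorem eq_of_fst_eq (hG : IsSecBij S T A σ τ G) (hτ : InjOn τ (Prod.snd '' G))
    {p q : S.Evt × T.Evt} (hp : p ∈ G) (hq : q ∈ G) (h : p.1 = q.1) : p = q :=
  Prod.ext h <| hτ (mem_image_of_mem _ hp) (mem_image_of_mem _ hq) <| by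
    rw [hG.snd_eq hp, hG.snd_eq hq, h]

theorem eq_of_snd_eq (hG : IsSecBij S T A σ τ G) (hσ : InjOn σ (Prod.fst '' G))
    {p q : S.Evt × T.Evt} (hp : p ∈ G) (hq : q ∈ G) (h : p.2 = q.2) : p = q :=
  Prod.ext (hσ (mem_image_of_mem _ hp) (mem_image_of_mem _ hq) <| by
    rw [← hG.snd_eq hp, ← hG.snd_eq hq, h]) h

theorem gIic (hG : IsSecBij S T A σ τ G) (hσ : InjOn σ (Prod.fst '' G))
    (t : S.Evt × T.Evt) : IsSecBij S T A σ τ (gIic S T G t) := by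
  have hsub := gIic_subset (S := S) (T := T) (G := G) (t := t)
  refine ⟨hG.1.of_subset_s12 (image_mono hsub) ?_, hG.2.1.of_subset_s12 (image_mono hsub) ?_,
    fun p hp => hG.2.2.1 p (hsub hp), ?_, ?_, fun p q hpq hqp =>
      hG.2.2.2.2.2 p q (reflTransGen_gRel_mono hsub hpq) (reflTransGen_gRel_mono hsub hqp)⟩
  · rintro _ ⟨q, hq, rfl⟩ s hs
    obtain rfl | hne := eq_or_ne s q.1
    · exact mem_image_of_mem _ hq
    obtain ⟨r, hr, rfl⟩ := hG.1.2.2 q.1 (mem_image_of_mem _ hq.1) s hs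
    exact ⟨r, ⟨hr, .head ⟨hr, hq.1, .inl ⟨hs, hne⟩⟩ hq.2⟩, rfl⟩
  · rintro _ ⟨q, hq, rfl⟩ u hu
    obtain rfl | hne := eq_or_ne u q.2
    · exact mem_image_of_mem _ hq
    obtain ⟨r, hr, rfl⟩ := hG.2.1.2.2 q.2 (mem_image_of_mem _ hq.1) u hu
    exact ⟨r, ⟨hr, .head ⟨hr, hq.1, .inr ⟨hu, hne⟩⟩ hq.2⟩, rfl⟩
  · rintro _ ⟨q, hq, rfl⟩ _ ⟨r, hr, rfl⟩ hqr
    have hrq : r = (q.1, r.2) := hG.eq_of_snd_eq hσ (hsub hr) (hG.2.2.2.1 _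
      (mem_image_of_mem _ (hsub hq)) _ (mem_image_of_mem _ (hsub hr)) hqr) rfl
    exact hrq ▸ hr
  · ext v
    constructor
    · rintro ⟨_, ⟨q, hq, rfl⟩, rfl⟩
      exact ⟨q.2, mem_image_of_mem _ hq, hG.snd_eq (hsub hq)⟩
    · rintro ⟨_, ⟨q, hq, rfl⟩, rfl⟩
      exact ⟨q.1, mem_image_of_mem _ hq, (hG.snd_eq (hsub hq)).symm⟩

theorem mem_of_reflTransGen (hW : IsSecBij S T A σ τ W) (hσ : InjOn σ (Prod.fst '' W))
    (hτ : InjOn τ (Prod.snd '' W)) {P : Set (S.Evt × T.Evt)} (hP : IsSecBij S T A σ τ P)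
    (hPW : P ⊆ W) {q t : S.Evt × T.Evt} (ht : t ∈ P) (h : ReflTransGen (gRel S T W) q t) :
    q ∈ P := by
  induction h using ReflTransGen.head_induction_on with
  | refl => exact ht
  | head hstep _ ih =>
    obtain ⟨hpW, -, hlt | hlt⟩ := hstep
    · obtain ⟨r, hr, hr1⟩ := hP.1.2.2 _ (mem_image_of_mem _ ih) _ hlt.1
      exact hW.eq_of_fst_eq hτ (hPW hr) hpW hr1 ▸ hr
    · obtain ⟨r, hr, hr2⟩ := hP.2.1.2.2 _ (mem_image_of_mem _ ih) _ hlt.1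
      exact hW.eq_of_snd_eq hσ (hPW hr) hpW hr2 ▸ hr

end IsSecBij

end SecuredBijection

theorem CC.exists_pos_of_reflTransGen_inl_inr {A : ESP} {c a : A.Evt}
    (h : ReflTransGen (ccGen A) (Sum.inl c) (Sum.inr a)) :
    ∃ b, A.pol b = true ∧ ReflTransGen (ccGen A) (Sum.inl c) (Sum.inr b) ∧
      ReflTransGen (ccGen A) (Sum.inr b) (Sum.inr a) := by
  generalize hp : (Sum.inl c : A.Evt ⊕ A.Evt) = p at h
  induction h using ReflTransGen.head_induction_on generalizing c with
  | refl => cases hp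
  | head hstep htail ih =>
    subst hp
    rcases hstep with hle | ⟨b, hb, hcb, rfl⟩ | ⟨b, -, hcb, -⟩
    · rename_i m
      rcases m with c' | c'
      · obtain ⟨b, hb, hc'b, hba⟩ := ih rfl
        exact ⟨b, hb, .head (.inl hle) hc'b, hba⟩
      · exact hle.elim
    · cases hcb
      exact ⟨c, hb, .single (.inr (.inl ⟨c, hb, rfl, rfl⟩)), htail⟩
    · cases hcb

section Copycat

variable {A S : ESP} {σ : S.Evt → A.Evt}

abbrev IsCCSecBij (A S : ESP) (σ : S.Evt → A.Evt)
    (G : Set ((S.Evt ⊕ A.Evt) × (A.Evt ⊕ A.Evt))) : Prop :=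
  IsSecBij (S.toES.par A.toES) (CC A).toES (A.toES.par A.toES) (Sum.map σ id) id G

abbrev ccRel (A S : ESP) (G : Set ((S.Evt ⊕ A.Evt) × (A.Evt ⊕ A.Evt))) :
    (S.Evt ⊕ A.Evt) × (A.Evt ⊕ A.Evt) → (S.Evt ⊕ A.Evt) × (A.Evt ⊕ A.Evt) → Prop :=
  gRel (S.toES.par A.toES) (CC A).toES G

abbrev visPair (S : ESP) {A : ESP} (a : A.Evt) : (S.Evt ⊕ A.Evt) × (A.Evt ⊕ A.Evt) :=
  (Sum.inr a, Sum.inr a)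

theorem injOn_sumMap (hσ : ∀ x, S.toES.Config x → InjOn σ x)
    {x : Set (S.toES.par A.toES).Evt} (hx : (S.toES.par A.toES).Config x) :
    InjOn (Sum.map σ id) x := by
  rintro (s | a) hs (t | b) ht h
  · exact congrArg Sum.inl (hσ _ hx.preimage_inl hs ht (Sum.inl_injective h))
  all_goals simp_all

namespace IsCCSecBij

variable {G : Set ((S.Evt ⊕ A.Evt) × (A.Evt ⊕ A.Evt))} {p : (S.Evt ⊕ A.Evt) × (A.Evt ⊕ A.Evt)}
  {a : A.Evt}

theorem snd_eq_sumMap (hG : IsCCSecBij A S σ G) (hp : p ∈ G) : p.2 = Sum.map σ id p.1 :=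
  hG.snd_eq hp

theorem eq_visPair_of_fst_eq (hG : IsCCSecBij A S σ G) (hp : p ∈ G) (h : p.1 = Sum.inr a) :
    p = visPair S a := by
  have hp2 := hG.snd_eq_sumMap hp
  obtain ⟨p1, p2⟩ := p
  subst h
  simp_all

theorem eq_visPair_of_snd_eq (hG : IsCCSecBij A S σ G) (hp : p ∈ G) (h : p.2 = Sum.inr a) :
    p = visPair S a := by
  have hp2 := hG.snd_eq_sumMap hp
  obtain ⟨p1 | p1, p2⟩ := p <;> subst h <;> simp_all

end IsCCSecBij

theorem eq_ccGraph {G : Set ((S.Evt ⊕ A.Evt) × (A.Evt ⊕ A.Evt))} (hG : IsCCSecBij A S σ G) :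
    G = ccGraph A S σ (Sum.inl ⁻¹' (Prod.fst '' G)) (Sum.inr ⁻¹' (Prod.fst '' G)) := by
  ext p
  simp only [ccGraph, mem_ofPred_eq, image_preimage_inl_union_image_preimage_inr]
  refine ⟨fun hp => ⟨mem_image_of_mem _ hp, hG.snd_eq_sumMap hp⟩, ?_⟩
  rintro ⟨⟨q, hq, hqp⟩, hp2⟩
  exact (Prod.ext hqp (by rw [hG.snd_eq_sumMap hq, hqp, hp2]) : q = p) ▸ hq

theorem ccGraph_mono {xS xS' : Set S.Evt} {xA xA' : Set A.Evt} (hS : xS ⊆ xS') (hA : xA ⊆ xA') :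
    ccGraph A S σ xS xA ⊆ ccGraph A S σ xS' xA' :=
  fun _ hp => ⟨union_subset_union (image_mono hS) (image_mono hA) hp.1, hp.2⟩

namespace ccCompES

variable (e : (ccCompES A S σ).Evt)

theorem isCCSecBij : IsCCSecBij A S σ e.val.val :=
  e.val.prop.1

theorem visPair_label_mem : visPair S (ccCompLabel A S σ e) ∈ e.val.val :=
  (e.prop : ccVis A S σ e.val).choose_spec.1

theorem reflTransGen_visPair_label {q : (S.Evt ⊕ A.Evt) × (A.Evt ⊕ A.Evt)} (hq : q ∈ e.val.val) :
    ReflTransGen (ccRel A S e.val.val) q (visPair S (ccCompLabel A S σ e)) :=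
  (e.prop : ccVis A S σ e.val).choose_spec.2 q hq

theorem label_eq_of_isTop {a : A.Evt} (ha : visPair S a ∈ e.val.val)
    (hle : ∀ q ∈ e.val.val, ReflTransGen (ccRel A S e.val.val) q (visPair S a)) :
    ccCompLabel A S σ e = a :=
  Sum.inr_injective <| congrArg Prod.fst <| (isCCSecBij e).2.2.2.2.2 _ _
    (hle _ (visPair_label_mem e)) (reflTransGen_visPair_label e ha)

end ccCompES

section WitnessUnion

variable {z : Set (ccCompES A S σ).Evt} {e : (ccCompES A S σ).Evt}

theorem mem_ccWitUnion {p : (S.Evt ⊕ A.Evt) × (A.Evt ⊕ A.Evt)} :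
    p ∈ ccWitUnion A S σ z ↔ ∃ e ∈ z, p ∈ e.val.val := by
  refine ⟨fun hp => ?_, fun ⟨e, he, hp⟩ => mem_iUnion₂.2 ⟨e.val, ⟨e, he, subset_rfl⟩, hp⟩⟩
  obtain ⟨H, ⟨e, he, hHe⟩, hpH⟩ := mem_iUnion₂.1 hp
  exact ⟨e, he, hHe hpH⟩

theorem subset_ccWitUnion (he : e ∈ z) : e.val.val ⊆ ccWitUnion A S σ z :=
  fun _ hp => mem_ccWitUnion.2 ⟨e, he, hp⟩

theorem ccWitUnion_insert :
    ccWitUnion A S σ (insert e z) = e.val.val ∪ ccWitUnion A S σ z := by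
  ext p
  exact mem_ccWitUnion.trans (exists_mem_insert.trans (or_congr Iff.rfl mem_ccWitUnion.symm))

theorem isCCSecBij_ccWitUnion (hz : (ccCompES A S σ).Config z) :
    IsCCSecBij A S σ (ccWitUnion A S σ z) := by
  have hcon := (hz.2.1 z subset_rfl hz.1).2
  have hunion : ⋃ G ∈ (Subtype.val '' z : Set (ccInterES A S σ).Evt), G.val =
      ccWitUnion A S σ z := by
    ext p
    refine mem_iUnion₂.trans (mem_ccWitUnion.trans ?_).symm
    exact ⟨fun ⟨e, he, hp⟩ => ⟨_, mem_image_of_mem _ he, hp⟩,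
      fun ⟨_, ⟨e, he, rfl⟩, hp⟩ => ⟨e, he, hp⟩⟩
  exact hunion ▸ hcon

theorem ccWitUnion_eq_ccGraph (hz : (ccCompES A S σ).Config z) :
    ccWitUnion A S σ z = ccGraph A S σ (ccWitS A S σ z) (ccWitA A S σ z) :=
  eq_ccGraph (isCCSecBij_ccWitUnion hz)

end WitnessUnion

end Copycat

section Configurations

variable {A S : ESP} {σ : S.Evt → A.Evt} {z : Set (ccCompES A S σ).Evt}
  {e f : (ccCompES A S σ).Evt}

theorem ccCompES.eq_of_label_eq (hσ : ∀ x, S.toES.Config x → InjOn σ x)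
    {W : Set ((S.Evt ⊕ A.Evt) × (A.Evt ⊕ A.Evt))} (hW : IsCCSecBij A S σ W)
    (he : e.val.val ⊆ W) (hf : f.val.val ⊆ W) (h : ccCompLabel A S σ e = ccCompLabel A S σ f) :
    e = f := by
  have hsub : ∀ {e f : (ccCompES A S σ).Evt}, e.val.val ⊆ W → f.val.val ⊆ W →
      ccCompLabel A S σ e = ccCompLabel A S σ f → e.val.val ⊆ f.val.val :=
    fun he hf h _ hq => hW.mem_of_reflTransGen (injOn_sumMap hσ hW.1) Function.injective_id.injOn
      (ccCompES.isCCSecBij _) hf (h ▸ ccCompES.visPair_label_mem _)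
      (reflTransGen_gRel_mono he (ccCompES.reflTransGen_visPair_label _ hq))
  exact Subtype.ext <| Subtype.ext <| (hsub he hf h).antisymm (hsub hf he h.symm)

theorem exists_mem_ccCompLabel_eq (hσ : ∀ x, S.toES.Config x → InjOn σ x)
    (hz : (ccCompES A S σ).Config z) {b : A.Evt} (hb : b ∈ ccWitA A S σ z) :
    ∃ e ∈ z, ccCompLabel A S σ e = b := by
  obtain ⟨p, hp, hpb⟩ := hb
  obtain ⟨G, hG, hpG⟩ := mem_ccWitUnion.1 hp
  have hbG := (ccCompES.isCCSecBij G).eq_visPair_of_fst_eq hpG hpb ▸ hpG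
  have hle : ∀ q ∈ gIic _ _ G.val.val (visPair S b),
      ReflTransGen (ccRel A S (gIic _ _ G.val.val (visPair S b))) q (visPair S b) :=
    fun _ hq => reflTransGen_gRel_gIic hq.2
  let e : (ccCompES A S σ).Evt :=
    ⟨⟨gIic _ _ G.val.val (visPair S b), (ccCompES.isCCSecBij G).gIic
      (injOn_sumMap hσ (ccCompES.isCCSecBij G).1) _, isPrime_gIic hbG⟩,
      b, mem_gIic_self hbG, hle⟩
  exact ⟨e, hz.2.2 G hG e gIic_subset, ccCompES.label_eq_of_isTop e (mem_gIic_self hbG) hle⟩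

theorem ccWitA_eq_image_ccCompLabel (hσ : ∀ x, S.toES.Config x → InjOn σ x)
    (hz : (ccCompES A S σ).Config z) : ccWitA A S σ z = ccCompLabel A S σ '' z := by
  ext b
  refine ⟨fun hb => exists_mem_ccCompLabel_eq hσ hz hb, ?_⟩
  rintro ⟨e, he, rfl⟩
  exact ⟨_, subset_ccWitUnion he (ccCompES.visPair_label_mem e), rfl⟩

theorem injOn_ccCompLabel (hσ : ∀ x, S.toES.Config x → InjOn σ x)
    (hz : (ccCompES A S σ).Config z) : InjOn (ccCompLabel A S σ) z :=
  fun _ he _ hf => ccCompES.eq_of_label_eq hσ (isCCSecBij_ccWitUnion hz)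
    (subset_ccWitUnion he) (subset_ccWitUnion hf)

theorem mem_of_subset_ccWitUnion (hσ : ∀ x, S.toES.Config x → InjOn σ x)
    (hz : (ccCompES A S σ).Config z) (he : e.val.val ⊆ ccWitUnion A S σ z) : e ∈ z := by
  obtain ⟨f, hf, hfe⟩ :=
    exists_mem_ccCompLabel_eq hσ hz ⟨_, he (ccCompES.visPair_label_mem e), rfl⟩
  exact ccCompES.eq_of_label_eq hσ (isCCSecBij_ccWitUnion hz) (subset_ccWitUnion hf) he hfe ▸ hf

end Configurations

section Covering

variable {A S : ESP} {σ : S.Evt → A.Evt} {z z' : Set (ccCompES A S σ).Evt}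
  {e : (ccCompES A S σ).Evt}

/-- Copycat links into the right-hand copy come from positive events only, so a left-hand
event below a negative right-hand event passes through a positive one. -/
theorem exists_visPair_ne_of_ccRel {G : Set ((S.Evt ⊕ A.Evt) × (A.Evt ⊕ A.Evt))}
    (hG : IsCCSecBij A S σ G) {m : (S.Evt ⊕ A.Evt) × (A.Evt ⊕ A.Evt)} {a : A.Evt}
    (hm : ccRel A S G m (visPair S a)) (ha : A.pol a = false) :
    ∃ c ≠ a, visPair S c ∈ G ∧ ReflTransGen (ccRel A S G) m (visPair S c) := by
  obtain ⟨hmG, haG, hlt⟩ := hm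
  have hm2 := hG.snd_eq_sumMap hmG
  obtain ⟨s | c, m2⟩ := m
  · obtain rfl : m2 = Sum.inl (σ s) := hm2
    obtain hlt | hlt := hlt
    · exact hlt.1.elim
    obtain ⟨b, hb, hmb, hba⟩ := CC.exists_pos_of_reflTransGen_inl_inr hlt.1
    obtain ⟨r, hr, hrb⟩ := hG.2.1.2.2 _ (mem_image_of_mem _ haG) _ hba
    have hbG : visPair S b ∈ G := hG.eq_visPair_of_snd_eq hr hrb ▸ hr
    exact ⟨b, fun hab => by simp_all, hbG, .single ⟨hmG, hbG, .inr ⟨hmb, Sum.inl_ne_inr⟩⟩⟩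
  · have hmc : ((Sum.inr c, m2) : (S.Evt ⊕ A.Evt) × (A.Evt ⊕ A.Evt)) = visPair S c :=
      hG.eq_visPair_of_fst_eq hmG rfl
    refine ⟨c, fun hca => ?_, hmc ▸ hmG, hmc ▸ .refl⟩
    subst hca
    obtain hlt | hlt := hlt
    · exact hlt.2 rfl
    · exact hlt.2 (congrArg Prod.snd hmc)

theorem ccWitS_insert_subset (hσ : ∀ x, S.toES.Config x → InjOn σ x)
    (hz : (ccCompES A S σ).Config (insert e z)) (hpol : A.pol (ccCompLabel A S σ e) = false) :
    ccWitS A S σ (insert e z) ⊆ ccWitS A S σ z := by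
  rintro s ⟨p, hp, hps⟩
  refine ⟨p, ?_, hps⟩
  rw [ccWitUnion_insert] at hp
  obtain hpe | hpz := hp
  swap
  · exact hpz
  have hW := isCCSecBij_ccWitUnion hz
  have heW := subset_ccWitUnion (mem_insert e z)
  obtain hpt | ⟨m, hpm, hmt⟩ := (ccCompES.reflTransGen_visPair_label e hpe).cases_tail
  · simp [← hpt] at hps
  obtain ⟨c, hc, hcW, hmc⟩ := exists_visPair_ne_of_ccRel hW (gRel_mono heW hmt) hpol
  obtain ⟨f, hf, rfl⟩ := exists_mem_ccCompLabel_eq hσ hz ⟨_, hcW, rfl⟩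
  have hfz : f ∈ z := (mem_insert_iff.1 hf).resolve_left (by rintro rfl; exact hc rfl)
  exact subset_ccWitUnion hfz <| hW.mem_of_reflTransGen (injOn_sumMap hσ hW.1)
    Function.injective_id.injOn (ccCompES.isCCSecBij f) (subset_ccWitUnion hf)
    (ccCompES.visPair_label_mem f) ((reflTransGen_gRel_mono heW hpm).trans hmc)

theorem ccWit_insert (hσ : ∀ x, S.toES.Config x → InjOn σ x) (hz : (ccCompES A S σ).Config z)
    (hz' : (ccCompES A S σ).Config (insert e z)) (he : e ∉ z) :
    ccWitS A S σ z ⊆ ccWitS A S σ (insert e z) ∧ ccCompLabel A S σ e ∉ ccWitA A S σ z ∧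
      ccWitA A S σ (insert e z) = insert (ccCompLabel A S σ e) (ccWitA A S σ z) := by
  rw [ccWitA_eq_image_ccCompLabel hσ hz, ccWitA_eq_image_ccCompLabel hσ hz', image_insert_eq]
  refine ⟨preimage_mono (image_mono ?_), ?_, rfl⟩
  · rw [ccWitUnion_insert]
    exact subset_union_right
  · rwa [(injOn_ccCompLabel hσ hz').mem_image_iff (subset_insert e z) (mem_insert e z)]

theorem exists_insert_of_ccWit (hσ : ∀ x, S.toES.Config x → InjOn σ x)
    (hz : (ccCompES A S σ).Config z) (hz' : (ccCompES A S σ).Config z')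
    (hS : ccWitS A S σ z ⊆ ccWitS A S σ z') {a : A.Evt} (ha : a ∉ ccWitA A S σ z)
    (hA : ccWitA A S σ z' = insert a (ccWitA A S σ z)) :
    ∃ e, e ∉ z ∧ z' = insert e z ∧ ccCompLabel A S σ e = a := by
  have hW : ccWitUnion A S σ z ⊆ ccWitUnion A S σ z' := by
    rw [ccWitUnion_eq_ccGraph hz, ccWitUnion_eq_ccGraph hz']
    exact ccGraph_mono hS (hA ▸ subset_insert a _)
  have hzz' : z ⊆ z' := fun e he => mem_of_subset_ccWitUnion hσ hz' ((subset_ccWitUnion he).trans hW)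
  rw [ccWitA_eq_image_ccCompLabel hσ hz] at ha hA
  rw [ccWitA_eq_image_ccCompLabel hσ hz'] at hA
  exact exists_eq_insert_of_image_eq_insert hzz' (injOn_ccCompLabel hσ hz') ha hA

end Covering

theorem covering_characterisation_for_copycat_composition_general
    (A S : ESP)
    (σ : S.Evt → A.Evt) (hσ : IsPreStrategy S A σ)
    (x1 x2 : Set (ccCompES A S σ).Evt)
    (h1 : (ccCompES A S σ).Config x1) (h2 : (ccCompES A S σ).Config x2) :
    ((∃ e, e ∉ x1 ∧ x2 = insert e x1 ∧ (ccCompESP A S σ).pol e = true) ↔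
      (ccWitS A S σ x1 ⊆ ccWitS A S σ x2 ∧
       ∃ a, a ∉ ccWitA A S σ x1 ∧ ccWitA A S σ x2 = insert a (ccWitA A S σ x1) ∧
         A.pol a = true)) ∧
    ((∃ e, e ∉ x1 ∧ x2 = insert e x1 ∧ (ccCompESP A S σ).pol e = false) ↔
      (ccWitS A S σ x1 = ccWitS A S σ x2 ∧
       ∃ a, a ∉ ccWitA A S σ x1 ∧ ccWitA A S σ x2 = insert a (ccWitA A S σ x1) ∧
         A.pol a = false)) := by
  have hinj : ∀ x, S.toES.Config x → InjOn σ x := hσ.1.2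
  refine ⟨⟨?_, ?_⟩, ⟨?_, ?_⟩⟩
  · rintro ⟨e, he, rfl, hpol⟩
    obtain ⟨hS, ha, hA⟩ := ccWit_insert hinj h1 h2 he
    exact ⟨hS, _, ha, hA, hpol⟩
  · rintro ⟨hS, a, ha, hA, hpol⟩
    obtain ⟨e, he, rfl, rfl⟩ := exists_insert_of_ccWit hinj h1 h2 hS ha hA
    exact ⟨e, he, rfl, hpol⟩
  · rintro ⟨e, he, rfl, hpol⟩
    obtain ⟨hS, ha, hA⟩ := ccWit_insert hinj h1 h2 he
    exact ⟨hS.antisymm (ccWitS_insert_subset hinj h2 hpol), _, ha, hA, hpol⟩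
  · rintro ⟨hS, a, ha, hA, hpol⟩
    obtain ⟨e, he, rfl, rfl⟩ := exists_insert_of_ccWit hinj h1 h2 hS.subset ha hA
    exact ⟨e, he, rfl, hpol⟩

/-- covering characterisation for compositions with copycat:
`x¹` extends to `x²` by one positive event iff `y¹_S ⊆ y²_S` and `y¹_A`
extends to `y²_A` by one positive event; `x¹` extends to `x²` by one negative
event iff `y¹_S = y²_S` and `y¹_A` extends to `y²_A` by one negative event. -/
theorem covering_characterisation_for_copycat_composition
    (A S : ESP) (hA : A.toES.IsES) (hS : S.toES.IsES)
    (σ : S.Evt → A.Evt) (hσ : IsPreStrategy S A σ)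
    (hrec : Receptive S A σ) (hcourt : Courteous S A σ)
    (x1 x2 : Set (ccCompES A S σ).Evt)
    (h1 : (ccCompES A S σ).Config x1) (h2 : (ccCompES A S σ).Config x2) :
    ((∃ e, e ∉ x1 ∧ x2 = insert e x1 ∧ (ccCompESP A S σ).pol e = true) ↔
      (ccWitS A S σ x1 ⊆ ccWitS A S σ x2 ∧
       ∃ a, a ∉ ccWitA A S σ x1 ∧ ccWitA A S σ x2 = insert a (ccWitA A S σ x1) ∧
         A.pol a = true)) ∧
    ((∃ e, e ∉ x1 ∧ x2 = insert e x1 ∧ (ccCompESP A S σ).pol e = false) ↔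
      (ccWitS A S σ x1 = ccWitS A S σ x2 ∧
       ∃ a, a ∉ ccWitA A S σ x1 ∧ ccWitA A S σ x2 = insert a (ccWitA A S σ x1) ∧
         A.pol a = false)) :=
  covering_characterisation_for_copycat_composition_general A S σ hσ x1 x2 h1 h2
end
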